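/- Let M ≥ 6 be an even integer and N1 ≥ 2. The SAULAs sum-difference co-array has strictly more consecutive integers around 0 than that of AULAs: the SAULAs co-array is hole-free on [−(2·N1·M + 2M − 2), 2·N1·M + 2M − 2] while the maximal symmetric hole-free interval of the AULAs sum-difference co-array is [−(2·N1·M + M − 2), 2·N1·M + M − 2]; the difference in one-sided extent is exactly M. -/
import Mathlib


def diffSet (P : Set ℤ) : Set ℤ := {d | ∃ u ∈ P, ∃ v ∈ P, d = u - v}

def sumSet (P : Set ℤ) : Set ℤ := {s | ∃ u ∈ P, ∃ v ∈ P, s = u + v}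

def SDC (P : Set ℤ) : Set ℤ :=
  diffSet P ∪ sumSet P ∪ {s | ∃ u ∈ P, ∃ v ∈ P, s = -u - v}

noncomputable def weight (P : Set ℤ) (f : ℤ) : ℕ :=
  Set.ncard {p : ℤ × ℤ | p.1 ∈ P ∧ p.2 ∈ P ∧ p.1 - p.2 = f}

def AULAs (M N1 : ℤ) : Set ℤ :=
  {x | ∃ k, 0 ≤ k ∧ k ≤ N1 - 1 ∧ x = k * M} ∪
  {x | ∃ j, 1 ≤ j ∧ j ≤ M / 2 ∧ x = N1 * M - M / 2 - 1 + j} ∪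
  {x | ∃ j, 1 ≤ j ∧ j ≤ M / 2 - 1 ∧ x = N1 * M + j}

def SAULAs (M N1 : ℤ) : Set ℤ :=
  {x | ∃ k, 0 ≤ k ∧ k ≤ N1 - 1 ∧ x = M / 2 + k * M} ∪
  {x | ∃ j, 1 ≤ j ∧ j ≤ M / 2 ∧ x = N1 * M - 1 + j} ∪
  {x | ∃ j, 1 ≤ j ∧ j ≤ M / 2 - 1 ∧ x = N1 * M + M / 2 + j}

def TSAULAs (M N1 : ℤ) : Set ℤ :=
  {x | ∃ k, 0 ≤ k ∧ k ≤ N1 - 1 ∧ x = M / 2 + k * M} ∪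
  {x | ∃ j, 1 ≤ j ∧ j ≤ M / 2 - 1 ∧ x = N1 * M - M / 2 + 2 * j} ∪
  {-(N1 * M) - M / 2 + 1} ∪
  {x | ∃ j, 1 ≤ j ∧ j ≤ M / 2 - 1 ∧ x = N1 * M + M / 2 - 1 + 2 * j}

def CoTSAULAs (M N1 : ℤ) : Set ℤ :=
  TSAULAs M N1 ∪ {N1 * M + 3 * M / 2 - 2}

lemma mem_sdc_diff {P : Set ℤ} {u v n : ℤ} (hu : u ∈ P) (hv : v ∈ P) (h : n = u - v) :
    n ∈ SDC P := Or.inl (Or.inl ⟨u, hu, v, hv, h⟩)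

lemma mem_sdc_sum {P : Set ℤ} {u v n : ℤ} (hu : u ∈ P) (hv : v ∈ P) (h : n = u + v) :
    n ∈ SDC P := Or.inl (Or.inr ⟨u, hu, v, hv, h⟩)

lemma sdc_neg {P : Set ℤ} {n : ℤ} (h : n ∈ SDC P) : -n ∈ SDC P := by
  rcases h with ((⟨u, hu, v, hv, e⟩ | ⟨u, hu, v, hv, e⟩) | ⟨u, hu, v, hv, e⟩)
  · exact Or.inl (Or.inl ⟨v, hv, u, hu, by omega⟩)
  · exact Or.inr ⟨u, hu, v, hv, by omega⟩
  · exact Or.inl (Or.inr ⟨u, hu, v, hv, by omega⟩)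

lemma mem_S1 {M N1 x k : ℤ} (h1 : 0 ≤ k) (h2 : k ≤ N1 - 1) (hx : x = M/2 + k*M) :
    x ∈ SAULAs M N1 := Or.inl (Or.inl ⟨k, h1, h2, hx⟩)

lemma mem_S_lo {M N1 o : ℤ} (h0 : 0 ≤ o) (h1 : o ≤ M/2 - 1) : N1*M + o ∈ SAULAs M N1 :=
  Or.inl (Or.inr ⟨o+1, by omega, by omega, by ring⟩)

lemma mem_S_hi {M N1 o : ℤ} (hM2 : M = 2*(M/2)) (h0 : M/2 + 1 ≤ o) (h1 : o ≤ M - 1) : N1*M + o ∈ SAULAs M N1 :=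
  Or.inr ⟨o - M/2, by omega, by omega, by ring⟩

lemma mult_S {M N1 t : ℤ} (hM : 6 ≤ M) (hM2 : M = 2*(M/2)) (hN1 : 2 ≤ N1)
    (h0 : 1 ≤ t) (h1 : t ≤ 2*N1 - 1) : t*M ∈ SDC (SAULAs M N1) := by
  have hab : min (t-1) (N1-1) + (t - 1 - min (t-1) (N1-1)) = t - 1 := by omega
  refine mem_sdc_sum (mem_S1 (k := min (t-1) (N1-1)) (by omega) (by omega) rfl)
    (mem_S1 (k := t - 1 - min (t-1) (N1-1)) (by omega) (by omega) rfl) ?_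
  have h3 : (min (t-1) (N1-1) + (t - 1 - min (t-1) (N1-1))) * M = (t-1) * M := by rw [hab]
  linarith [h3, hM2]

lemma saulas_cover (M N1 : ℤ) (hM : 6 ≤ M) (hMe : Even M) (hN1 : 2 ≤ N1) :
    ∀ n : ℤ, 0 ≤ n → n ≤ 2*N1*M + 2*M - 2 → n ∈ SDC (SAULAs M N1) := by
  have hM2 : M = 2*(M/2) := by obtain ⟨r, hr⟩ := hMe; omega
  have h2M : 2*M ≤ N1*M := mul_le_mul_of_nonneg_right hN1 (by omega)
  intro n h0 h1
  rcases le_or_gt n (M-1) with hc1 | hc1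
  · -- block differences cover [0, M-1]
    by_cases hn : n = M/2
    · refine mem_sdc_diff (mem_S_hi hM2 (o := M/2+1) (by omega) (by omega))
        (mem_S_lo (o := 1) (by omega) (by omega)) (by linarith)
    · rcases le_or_gt n (M/2 - 1) with h | h
      · exact mem_sdc_diff (mem_S_lo (o := n) (by omega) (by omega))
          (mem_S_lo (o := 0) (by omega) (by omega)) (by linarith)
      · exact mem_sdc_diff (mem_S_hi hM2 (o := n) (by omega) (by omega))
          (mem_S_lo (o := 0) (by omega) (by omega)) (by linarith)
  rcases le_or_gt n (N1*M + M/2 - 1) with hc2 | hc2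
  · -- mixed differences cover [M, N1*M + M/2 - 1]
    set q := (n - M/2) / M with hqdef
    set r := (n - M/2) % M with hrdef
    have hdiv : M * q + r = n - M/2 := Int.mul_ediv_add_emod _ _
    have hr0 : 0 ≤ r := Int.emod_nonneg _ (by omega)
    have hr1 : r < M := Int.emod_lt_of_pos _ (by omega)
    have hq0 : 0 ≤ q := Int.ediv_nonneg (by omega) (by omega)
    have hq1 : q ≤ N1 - 1 := by
      by_contra hcon; push_neg at hcon
      have h := mul_le_mul_of_nonneg_right (show N1 ≤ q by omega) (show (0:ℤ) ≤ M by omega)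
      linarith
    by_cases hrH : r = M/2
    · have hn : n = (q+1)*M := by linarith [show (q+1)*M = q*M + M from by ring]
      rw [hn]; exact mult_S hM hM2 hN1 (by omega) (by omega)
    · have e1 : (N1-1-q)*M = N1*M - M - q*M := by ring
      rcases le_or_gt r (M/2 - 1) with h | h
      · exact mem_sdc_diff (mem_S_lo (o := r) hr0 (by omega))
          (mem_S1 (k := N1-1-q) (by omega) (by omega) rfl) (by linarith)
      · exact mem_sdc_diff (mem_S_hi hM2 (o := r) (by omega) (by omega))
          (mem_S1 (k := N1-1-q) (by omega) (by omega) rfl) (by linarith)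
  rcases le_or_gt n (2*N1*M + M/2 - 1) with hc3 | hc3
  · -- mixed sums cover [N1*M + M/2, 2*N1*M + M/2 - 1]
    set q := (n - M/2 - N1*M) / M with hqdef
    set r := (n - M/2 - N1*M) % M with hrdef
    have hdiv : M * q + r = n - M/2 - N1*M := Int.mul_ediv_add_emod _ _
    have hr0 : 0 ≤ r := Int.emod_nonneg _ (by omega)
    have hr1 : r < M := Int.emod_lt_of_pos _ (by omega)
    have hq0 : 0 ≤ q := Int.ediv_nonneg (by linarith) (by omega)
    have hq1 : q ≤ N1 - 1 := by
      by_contra hcon; push_neg at hcon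
      have h := mul_le_mul_of_nonneg_right (show N1 ≤ q by omega) (show (0:ℤ) ≤ M by omega)
      linarith
    by_cases hrH : r = M/2
    · by_cases hq : q = N1 - 1
      · have e1 : M * q = M * (N1 - 1) := by rw [hq]
        exact mem_sdc_sum (mem_S_lo (M := M) (N1 := N1) (o := 0) (by omega) (by omega))
          (mem_S_lo (o := 0) (by omega) (by omega)) (by linarith)
      · have hn : n = (N1+q+1)*M := by
          linarith [show (N1+q+1)*M = N1*M + q*M + M from by ring]
        rw [hn]; exact mult_S hM hM2 hN1 (by omega) (by omega)
    · rcases le_or_gt r (M/2 - 1) with h | h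
      · exact mem_sdc_sum (mem_S1 (k := q) hq0 hq1 rfl)
          (mem_S_lo (o := r) hr0 (by omega)) (by linarith)
      · exact mem_sdc_sum (mem_S1 (k := q) hq0 hq1 rfl)
          (mem_S_hi hM2 (o := r) (by omega) (by omega)) (by linarith)
  · -- block sums cover [2*N1*M + M/2, 2*N1*M + 2*M - 2]
    obtain ⟨t, ht⟩ : ∃ t, n = 2*N1*M + t := ⟨n - 2*N1*M, by ring⟩
    have ht1 : M/2 ≤ t := by linarith
    have ht2 : t ≤ 2*M - 2 := by linarith
    rcases le_or_gt t (M - 2) with h | h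
    · -- a = M/2-1 (lo), b = t - M/2 + 1 ∈ [1, M/2-1] (lo)
      exact mem_sdc_sum (mem_S_lo (o := M/2 - 1) (by omega) (by omega))
        (mem_S_lo (o := t - M/2 + 1) (by omega) (by omega)) (by linarith)
    rcases le_or_gt t (M + M/2 - 2) with h2 | h2
    · -- a = M-1 (hi), b = t - M + 1 ∈ [0, M/2-1] (lo)
      exact mem_sdc_sum (mem_S_hi hM2 (o := M - 1) (by omega) (by omega))
        (mem_S_lo (o := t - M + 1) (by omega) (by omega)) (by linarith)
    rcases le_or_gt t (M + M/2 - 1) with h3 | h3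
    · -- t = M + M/2 - 1 : a = M-2 (hi), b = M/2+1 (hi)
      exact mem_sdc_sum (mem_S_hi hM2 (o := M - 2) (by omega) (by omega))
        (mem_S_hi hM2 (o := M/2 + 1) (by omega) (by omega)) (by linarith)
    · -- a = M-1 (hi), b = t - M + 1 ∈ [M/2+1, M-1] (hi)
      exact mem_sdc_sum (mem_S_hi hM2 (o := M - 1) (by omega) (by omega))
        (mem_S_hi hM2 (o := t - M + 1) (by omega) (by omega)) (by linarith)

lemma mem_A1 {M N1 x k : ℤ} (h1 : 0 ≤ k) (h2 : k ≤ N1 - 1) (hx : x = k*M) :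
    x ∈ AULAs M N1 := Or.inl (Or.inl ⟨k, h1, h2, hx⟩)

lemma mem_A_lo {M N1 o : ℤ} (h0 : -(M/2) ≤ o) (h1 : o ≤ -1) : N1*M + o ∈ AULAs M N1 :=
  Or.inl (Or.inr ⟨o + M/2 + 1, by omega, by omega, by ring⟩)

lemma mem_A_hi {M N1 o : ℤ} (h0 : 1 ≤ o) (h1 : o ≤ M/2 - 1) : N1*M + o ∈ AULAs M N1 :=
  Or.inr ⟨o, h0, h1, by ring⟩

lemma mult_A {M N1 t : ℤ} (hN1 : 2 ≤ N1) (h0 : 0 ≤ t) (h1 : t ≤ 2*N1 - 2) :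
    t*M ∈ SDC (AULAs M N1) := by
  have hab : min t (N1-1) + (t - min t (N1-1)) = t := by omega
  refine mem_sdc_sum (mem_A1 (k := min t (N1-1)) (by omega) (by omega) rfl)
    (mem_A1 (k := t - min t (N1-1)) (by omega) (by omega) rfl) ?_
  have h3 : (min t (N1-1) + (t - min t (N1-1))) * M = t * M := by rw [hab]
  linarith [h3]

lemma aulas_cover (M N1 : ℤ) (hM : 6 ≤ M) (hMe : Even M) (hN1 : 2 ≤ N1) :
    ∀ n : ℤ, 0 ≤ n → n ≤ 2*N1*M + M - 2 → n ∈ SDC (AULAs M N1) := by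
  have hM2 : M = 2*(M/2) := by obtain ⟨r, hr⟩ := hMe; omega
  have h2M : 2*M ≤ N1*M := mul_le_mul_of_nonneg_right hN1 (by omega)
  intro n h0 h1
  rcases le_or_gt n (M-1) with hc1 | hc1
  · -- block differences cover [0, M-1]
    by_cases hn : n = M/2
    · exact mem_sdc_diff (mem_A_hi (o := 1) (by omega) (by omega))
        (mem_A_lo (o := 1 - M/2) (by omega) (by omega)) (by linarith)
    · rcases le_or_gt n (M/2 - 1) with h | h
      · exact mem_sdc_diff (mem_A_lo (o := n - M/2) (by omega) (by omega))
          (mem_A_lo (o := -(M/2)) (by omega) (by omega)) (by linarith)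
      · exact mem_sdc_diff (mem_A_hi (o := n - M/2) (by omega) (by omega))
          (mem_A_lo (o := -(M/2)) (by omega) (by omega)) (by linarith)
  rcases le_or_gt n (N1*M + M/2 - 1) with hc2 | hc2
  · -- mixed differences
    set q := (n + M/2) / M with hqdef
    set r := (n + M/2) % M with hrdef
    have hdiv : M * q + r = n + M/2 := Int.mul_ediv_add_emod _ _
    have hr0 : 0 ≤ r := Int.emod_nonneg _ (by omega)
    have hr1 : r < M := Int.emod_lt_of_pos _ (by omega)
    have hq0 : 1 ≤ q := by
      by_contra hcon; push_neg at hcon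
      have h := mul_le_mul_of_nonneg_left (show q ≤ 0 by omega) (show (0:ℤ) ≤ M by omega)
      linarith
    have hq1 : q ≤ N1 := by
      by_contra hcon; push_neg at hcon
      have h := mul_le_mul_of_nonneg_right (show N1 + 1 ≤ q by omega) (show (0:ℤ) ≤ M by omega)
      linarith [show (N1+1)*M = N1*M + M from by ring]
    by_cases hrH : r = M/2
    · have hn : n = q*M := by linarith
      rw [hn]; exact mult_A hN1 (by omega) (by omega)
    · have e1 : (N1-q)*M = N1*M - q*M := by ring
      rcases le_or_gt r (M/2 - 1) with h | h
      · exact mem_sdc_diff (mem_A_lo (o := r - M/2) (by omega) (by omega))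
          (mem_A1 (k := N1-q) (by omega) (by omega) rfl) (by linarith)
      · exact mem_sdc_diff (mem_A_hi (o := r - M/2) (by omega) (by omega))
          (mem_A1 (k := N1-q) (by omega) (by omega) rfl) (by linarith)
  rcases le_or_gt n (2*N1*M - M + M/2 - 1) with hc3 | hc3
  · -- mixed sums
    set q := (n + M/2 - N1*M) / M with hqdef
    set r := (n + M/2 - N1*M) % M with hrdef
    have hdiv : M * q + r = n + M/2 - N1*M := Int.mul_ediv_add_emod _ _
    have hr0 : 0 ≤ r := Int.emod_nonneg _ (by omega)
    have hr1 : r < M := Int.emod_lt_of_pos _ (by omega)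
    have hq0 : 0 ≤ q := Int.ediv_nonneg (by linarith) (by omega)
    have hq1 : q ≤ N1 - 1 := by
      by_contra hcon; push_neg at hcon
      have h := mul_le_mul_of_nonneg_right (show N1 ≤ q by omega) (show (0:ℤ) ≤ M by omega)
      linarith
    by_cases hrH : r = M/2
    · by_cases hq : q = N1 - 1
      · have e1 : M * q = M * (N1 - 1) := by rw [hq]
        exact mem_sdc_sum (mem_A_lo (M := M) (N1 := N1) (o := -(M/2)) (by omega) (by omega))
          (mem_A_lo (o := -(M/2)) (by omega) (by omega)) (by linarith)
      · have hn : n = (N1+q)*M := by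
          linarith [show (N1+q)*M = N1*M + q*M from by ring]
        rw [hn]; exact mult_A hN1 (by omega) (by omega)
    · rcases le_or_gt r (M/2 - 1) with h | h
      · exact mem_sdc_sum (mem_A1 (k := q) hq0 hq1 rfl)
          (mem_A_lo (o := r - M/2) (by omega) (by omega)) (by linarith)
      · exact mem_sdc_sum (mem_A1 (k := q) hq0 hq1 rfl)
          (mem_A_hi (o := r - M/2) (by omega) (by omega)) (by linarith)
  · -- block sums, t = n - 2*N1*M ∈ [-M/2, M-2]
    obtain ⟨t, ht⟩ : ∃ t, n = 2*N1*M + t := ⟨n - 2*N1*M, by ring⟩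
    have ht1 : -(M/2) ≤ t := by linarith
    have ht2 : t ≤ M - 2 := by linarith
    rcases le_or_gt t (-(M/2)) with h | h
    · -- t = -M/2 : a = -M/2+1 (lo), b = -1 (lo)
      exact mem_sdc_sum (mem_A_lo (o := -(M/2) + 1) (by omega) (by omega))
        (mem_A_lo (o := -1) (by omega) (by omega)) (by linarith)
    rcases le_or_gt t (-1) with h2 | h2
    · -- a = -M/2 (lo), b = t + M/2 ∈ [1, M/2-1] (hi)
      exact mem_sdc_sum (mem_A_lo (o := -(M/2)) (by omega) (by omega))
        (mem_A_hi (o := t + M/2) (by omega) (by omega)) (by linarith)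
    rcases le_or_gt t (M/2 - 2) with h3 | h3
    · -- t ∈ [0, M/2-2] : a = -1 (lo), b = t+1 ∈ [1, M/2-1] (hi)
      exact mem_sdc_sum (mem_A_lo (o := -1) (by omega) (by omega))
        (mem_A_hi (o := t + 1) (by omega) (by omega)) (by linarith)
    rcases le_or_gt t (M/2 - 1) with h4 | h4
    · -- t = M/2-1 : a = M/2-2 (hi), b = 1 (hi)
      exact mem_sdc_sum (mem_A_hi (o := M/2 - 2) (by omega) (by omega))
        (mem_A_hi (o := 1) (by omega) (by omega)) (by linarith)
    · -- t ∈ [M/2, M-2] : a = M/2-1 (hi), b = t - M/2 + 1 ∈ [1, M/2-1] (hi)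
      exact mem_sdc_sum (mem_A_hi (o := M/2 - 1) (by omega) (by omega))
        (mem_A_hi (o := t - M/2 + 1) (by omega) (by omega)) (by linarith)

lemma aulas_bounds {M N1 x : ℤ} (hM : 6 ≤ M) (hN1 : 2 ≤ N1) (hx : x ∈ AULAs M N1) :
    0 ≤ x ∧ x ≤ N1*M + M/2 - 1 := by
  have hH : 3 ≤ M/2 := by omega
  have h2M : 2*M ≤ N1*M := mul_le_mul_of_nonneg_right hN1 (by omega)
  rcases hx with ((⟨k, h1, h2, rfl⟩ | ⟨j, h1, h2, rfl⟩) | ⟨j, h1, h2, rfl⟩)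
  · have hu := mul_le_mul_of_nonneg_right h2 (show (0:ℤ) ≤ M by omega)
    have hl := mul_nonneg h1 (show (0:ℤ) ≤ M by omega)
    constructor
    · exact hl
    · linarith [show (N1-1)*M = N1*M - M from by ring]
  · omega
  · omega

lemma aulas_notMem (M N1 : ℤ) (hM : 6 ≤ M) (hMe : Even M) (hN1 : 2 ≤ N1) :
    (2*N1*M + M - 1) ∉ SDC (AULAs M N1) := by
  have hM2 : M = 2*(M/2) := by obtain ⟨r, hr⟩ := hMe; omega
  have h2M : 2*M ≤ N1*M := mul_le_mul_of_nonneg_right hN1 (by omega)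
  rintro ((⟨u, hu, v, hv, e⟩ | ⟨u, hu, v, hv, e⟩) | ⟨u, hu, v, hv, e⟩) <;>
    obtain ⟨hu1, hu2⟩ := aulas_bounds hM hN1 hu <;>
    obtain ⟨hv1, hv2⟩ := aulas_bounds hM hN1 hv <;> linarith

theorem stmt5 (M N1 : ℤ) (hM : 6 ≤ M) (hMe : Even M) (hN1 : 2 ≤ N1) :
    (∀ n : ℤ, |n| ≤ 2 * N1 * M + 2 * M - 2 → n ∈ SDC (SAULAs M N1)) ∧
    IsGreatest {m : ℤ | 0 ≤ m ∧ ∀ n : ℤ, |n| ≤ m → n ∈ SDC (AULAs M N1)}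
      (2 * N1 * M + M - 2) ∧
    (2 * N1 * M + 2 * M - 2) - (2 * N1 * M + M - 2) = M := by
  have h2M : 2*M ≤ N1*M := mul_le_mul_of_nonneg_right hN1 (by omega)
  refine ⟨?_, ⟨⟨by linarith, ?_⟩, ?_⟩, by ring⟩
  · intro n hn
    rw [abs_le] at hn
    rcases le_or_gt 0 n with h | h
    · exact saulas_cover M N1 hM hMe hN1 n h (by linarith)
    · have := sdc_neg (saulas_cover M N1 hM hMe hN1 (-n) (by omega) (by linarith))
      simpa using this
  · intro n hn
    rw [abs_le] at hn
    rcases le_or_gt 0 n with h | h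
    · exact aulas_cover M N1 hM hMe hN1 n h (by linarith)
    · have := sdc_neg (aulas_cover M N1 hM hMe hN1 (-n) (by omega) (by linarith))
      simpa using this
  · rintro m ⟨hm0, hm⟩
    by_contra hcon; push_neg at hcon
    exact aulas_notMem M N1 hM hMe hN1
      (hm (2*N1*M + M - 1) (by rw [abs_of_nonneg (by linarith)]; linarith))
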